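/- arXiv:1203.1115 — 3 statements merged into one kernel-verified Lean document; each statement's English description precedes it below -/
import Mathlib

section
/- Fix positive integers a,b,c. For any non-negative integers p, m and n, ζ*_p({c}^m,b,{a}^n) = Σ_{k=0}^m Σ_{l=0}^n (-1)^{k+l} · ζ_p({a}^l,b,{c}^k) · ζ*_p({c}^{m-k}) · ζ*_p({a}^{n-l}). -/
open scoped BigOperators

/-- Truncated multiple zeta value: sum over strictly decreasing tuples bounded by p. -/
noncomputable def zetaT (p : ℕ) (ks : List ℕ) : ℝ :=
  ∑ f ∈ (Fintype.piFinset fun _ : Fin ks.length => Finset.Icc 1 p) |>.filter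
      (fun f => ∀ i j : Fin ks.length, i < j → f j < f i),
    ∏ i, ((f i : ℝ) ^ ks.get i)⁻¹

/-- Truncated multiple zeta-star value: sum over weakly decreasing tuples bounded by p. -/
noncomputable def zetaStarT (p : ℕ) (ks : List ℕ) : ℝ :=
  ∑ f ∈ (Fintype.piFinset fun _ : Fin ks.length => Finset.Icc 1 p) |>.filter
      (fun f => ∀ i j : Fin ks.length, i ≤ j → f j ≤ f i),
    ∏ i, ((f i : ℝ) ^ ks.get i)⁻¹

/-!
Splitting a chain at the entry `q` that carries the exponent `b` gives
`ζ*_p({c}^m, b, {a}^n) = ∑_q q^{-b} h_m(c; [q, p]) h_n(a; [1, q])` and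
`ζ_p({a}^l, b, {c}^k) = ∑_q q^{-b} e_l(a; (q, p]) e_k(c; [1, q))`, where `e_k(c; A)` and
`h_k(c; A)` are the elementary and complete homogeneous symmetric functions of the weights
`x^{-c}`, `x ∈ A` (these are ζ and ζ* with a repeated index). The theorem then follows from
`∑_k (-1)^k e_k(A) h_{m-k}(A ⊔ B) = h_m(B)`, the coefficient of `X^m` in
`∏_{x ∈ A} (1 - w x X) · ∏_{x ∈ A ⊔ B} (1 - w x X)⁻¹ = ∏_{x ∈ B} (1 - w x X)⁻¹`.
-/

open Finset PowerSeries

section Chain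

variable {α M : Type*} [AddCommMonoid M] (r : α → α → Prop) [DecidableRel r]

theorem Finset.sum_filter_chain_piFinset_succ [IsTrans α r] {n : ℕ} (S : Finset α)
    (F : (Fin (n + 1) → α) → M) :
    ∑ f ∈ {f ∈ Fintype.piFinset fun _ => S | ∀ i j, i < j → r (f i) (f j)}, F f =
      ∑ x ∈ S, ∑ g ∈ {g ∈ Fintype.piFinset fun _ => {y ∈ S | r x y} | ∀ i j, i < j → r (g i) (g j)},
        F (Fin.cons x g) := by
  rw [sum_sigma']
  refine sum_nbij' (fun f => ⟨f 0, Fin.tail f⟩) (fun p => Fin.cons p.1 p.2) ?_ ?_ ?_ ?_ ?_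
  · intro f hf
    have hchain := Fin.liftFun_cons r (a := f 0) (f := Fin.tail f)
    simp only [Fin.cons_self_tail, Relator.LiftFun] at hchain
    simp_all [Fin.forall_iff_succ, Fin.tail]
  · rintro ⟨x, g⟩ hg
    have hchain := Fin.liftFun_cons r (a := x) (f := g)
    simp only [Relator.LiftFun] at hchain
    simp_all [Fin.forall_iff_succ]
  · intro f _
    exact Fin.cons_self_tail f
  · rintro ⟨x, g⟩ _
    simp
  · intro f _
    rw [Fin.cons_self_tail]

variable {ι R : Type*} [CommSemiring R]

noncomputable def chainSum (w : ι → α → R) (S : Finset α) (ks : List ι) : R :=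
  ∑ f ∈ {f ∈ Fintype.piFinset fun _ : Fin ks.length => S | ∀ i j, i < j → r (f i) (f j)},
    ∏ i, w (ks.get i) (f i)

variable {r}

@[simp]
theorem chainSum_nil (w : ι → α → R) (S : Finset α) : chainSum r w S [] = 1 := by
  simp [chainSum]

theorem chainSum_cons [IsTrans α r] (w : ι → α → R) (S : Finset α) (k : ι) (ks : List ι) :
    chainSum r w S (k :: ks) = ∑ x ∈ S, w k x * chainSum r w {y ∈ S | r x y} ks := by
  refine (sum_filter_chain_piFinset_succ r (n := ks.length) S _).trans ?_
  simp only [chainSum, mul_sum]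
  exact sum_congr rfl fun x _ => sum_congr rfl fun g _ => Fin.prod_univ_succ _

theorem chainSum_append_cons [IsTrans α r] (w : ι → α → R) (us : List ι) (b : ι)
    (vs : List ι) (S : Finset α) :
    chainSum r w S (us ++ b :: vs) =
      ∑ q ∈ S, w b q * chainSum r w {y ∈ S | r y q} us * chainSum r w {y ∈ S | r q y} vs := by
  induction us generalizing S with
  | nil => simp [chainSum_cons]
  | cons u us ih =>
    simp only [List.cons_append, chainSum_cons, ih, mul_sum, sum_mul, sum_filter]
    rw [sum_comm]
    refine sum_congr rfl fun q _ => sum_congr rfl fun x _ => ?_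
    split_ifs with hxq
    · have hleft : {y ∈ {y ∈ S | r x y} | r y q} = {y ∈ {y ∈ S | r y q} | r x y} := by
        simp only [filter_filter, and_comm]
      have hright : {y ∈ {y ∈ S | r x y} | r q y} = {y ∈ S | r q y} := by
        ext y
        simp only [mem_filter]
        exact ⟨fun h => ⟨h.1.1, h.2⟩, fun h => ⟨⟨h.1, _root_.trans hxq h.2⟩, h.2⟩⟩
      rw [hleft, hright]
      ring
    · simp

end Chain

section Series

variable {α R : Type*} [CommRing R]

theorem PowerSeries.one_sub_C_mul_X_mul_mk_pow (a : R) :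
    (1 - C a * X) * mk (fun n => a ^ n) = 1 := by
  ext (_ | n)
  · simp
  · simp [sub_mul, mul_assoc, coeff_succ_X_mul, pow_succ', coeff_one]

theorem PowerSeries.coeff_succ_mk_pow_mul (a : R) (F : R⟦X⟧) (n : ℕ) :
    coeff (n + 1) (mk (fun k => a ^ k) * F) =
      coeff (n + 1) F + a * coeff n (mk (fun k => a ^ k) * F) := by
  have hgeom : mk (fun k => a ^ k) = 1 + C a * X * mk (fun k => a ^ k) := by
    linear_combination one_sub_C_mul_X_mul_mk_pow a
  conv_lhs => rw [hgeom]
  rw [add_mul, map_add, one_mul, mul_assoc, mul_assoc, coeff_C_mul, coeff_succ_X_mul]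

theorem PowerSeries.coeff_succ_one_sub_C_mul_X_mul (a : R) (F : R⟦X⟧) (n : ℕ) :
    coeff (n + 1) ((1 - C a * X) * F) = coeff (n + 1) F - a * coeff n F := by
  rw [sub_mul, one_mul, map_sub, mul_assoc, coeff_C_mul, coeff_succ_X_mul]

noncomputable def completeSeries (w : α → R) (S : Finset α) : R⟦X⟧ :=
  ∏ x ∈ S, mk fun n => w x ^ n

noncomputable def completeSeriesInv (w : α → R) (S : Finset α) : R⟦X⟧ :=
  ∏ x ∈ S, (1 - C (w x) * X)

theorem completeSeriesInv_mul_completeSeries (w : α → R) (S : Finset α) :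
    completeSeriesInv w S * completeSeries w S = 1 := by
  simp only [completeSeriesInv, completeSeries, ← prod_mul_distrib,
    one_sub_C_mul_X_mul_mk_pow, prod_const_one]

theorem completeSeriesInv_filter_mul_completeSeries (w : α → R) (S : Finset α) (P : α → Prop)
    [DecidablePred P] :
    completeSeriesInv w {x ∈ S | P x} * completeSeries w S = completeSeries w {x ∈ S | ¬P x} := by
  rw [completeSeries, ← prod_filter_mul_prod_filter_not S P, ← mul_assoc, ← completeSeries,
    completeSeriesInv_mul_completeSeries, one_mul, completeSeries]

@[simp]
theorem coeff_zero_completeSeries (w : α → R) (S : Finset α) :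
    coeff 0 (completeSeries w S) = 1 := by
  simp [completeSeries, coeff_zero_eq_constantCoeff_apply, map_prod]

@[simp]
theorem coeff_zero_completeSeriesInv (w : α → R) (S : Finset α) :
    coeff 0 (completeSeriesInv w S) = 1 := by
  simp [completeSeriesInv, coeff_zero_eq_constantCoeff_apply, map_prod]

variable [LinearOrder α]

theorem coeff_succ_completeSeries (w : α → R) (S : Finset α) (n : ℕ) :
    coeff (n + 1) (completeSeries w S) =
      ∑ x ∈ S, w x * coeff n (completeSeries w {y ∈ S | y ≤ x}) := by
  induction S using Finset.induction_on_max with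
  | empty => simp [completeSeries, coeff_one]
  | insert a S ha ih =>
    have haS : a ∉ S := fun h => lt_irrefl a (ha a h)
    have htop : {y ∈ insert a S | y ≤ a} = insert a S :=
      filter_true_of_mem fun y hy => (mem_insert.1 hy).elim le_of_eq (fun h => (ha y h).le)
    have hbelow : ∀ x ∈ S, {y ∈ insert a S | y ≤ x} = {y ∈ S | y ≤ x} := fun x hx => by
      rw [filter_insert, if_neg (not_le.2 (ha x hx))]
    rw [sum_insert haS, htop, sum_congr rfl fun x hx => by rw [hbelow x hx], ← ih,
      completeSeries, prod_insert haS, coeff_succ_mk_pow_mul, ← completeSeries]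
    ring

theorem coeff_succ_completeSeriesInv (w : α → R) (S : Finset α) (n : ℕ) :
    coeff (n + 1) (completeSeriesInv w S) =
      -∑ x ∈ S, w x * coeff n (completeSeriesInv w {y ∈ S | y < x}) := by
  induction S using Finset.induction_on_max with
  | empty => simp [completeSeriesInv, coeff_one]
  | insert a S ha ih =>
    have haS : a ∉ S := fun h => lt_irrefl a (ha a h)
    have htop : {y ∈ insert a S | y < a} = S := by
      rw [filter_insert, if_neg (lt_irrefl a)]
      exact filter_true_of_mem ha
    have hbelow : ∀ x ∈ S, {y ∈ insert a S | y < x} = {y ∈ S | y < x} := fun x hx => by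
      rw [filter_insert, if_neg (not_lt.2 (ha x hx).le)]
    rw [sum_insert haS, htop, sum_congr rfl fun x hx => by rw [hbelow x hx], neg_add, ← ih,
      completeSeriesInv, prod_insert haS, coeff_succ_one_sub_C_mul_X_mul, ← completeSeriesInv]
    ring

end Series

section Replicate

variable {α ι R : Type*} [CommRing R] [LinearOrder α]

theorem chainSum_ge_replicate (w : ι → α → R) (c : ι) (m : ℕ) (S : Finset α) :
    chainSum (· ≥ ·) w S (List.replicate m c) = coeff m (completeSeries (w c) S) := by
  induction m generalizing S with
  | zero => simp
  | succ m ih =>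
    simp only [List.replicate_succ, chainSum_cons, ih, ge_iff_le, coeff_succ_completeSeries]

theorem chainSum_gt_replicate (w : ι → α → R) (c : ι) (k : ℕ) (S : Finset α) :
    chainSum (· > ·) w S (List.replicate k c) =
      (-1) ^ k * coeff k (completeSeriesInv (w c) S) := by
  induction k generalizing S with
  | zero => simp
  | succ k ih =>
    simp only [List.replicate_succ, chainSum_cons, ih, gt_iff_lt, coeff_succ_completeSeriesInv,
      mul_neg, mul_sum, ← sum_neg_distrib]
    exact sum_congr rfl fun x _ => by ring

theorem sum_range_chainSum_gt_mul_chainSum_ge (w : ι → α → R) (c : ι) (m : ℕ) (S : Finset α)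
    (P : α → Prop) [DecidablePred P] :
    ∑ k ∈ range (m + 1), (-1) ^ k * chainSum (· > ·) w {x ∈ S | P x} (List.replicate k c) *
        chainSum (· ≥ ·) w S (List.replicate (m - k) c) =
      chainSum (· ≥ ·) w {x ∈ S | ¬P x} (List.replicate m c) := by
  simp only [chainSum_gt_replicate, chainSum_ge_replicate,
    ← completeSeriesInv_filter_mul_completeSeries (w c) S P, coeff_mul,
    Nat.sum_antidiagonal_eq_sum_range_succ_mk]
  refine sum_congr rfl fun k _ => ?_
  rw [← mul_assoc, ← mul_pow]
  simp

end Replicate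

theorem zetaT_eq_chainSum (p : ℕ) (ks : List ℕ) :
    zetaT p ks = chainSum (· > ·) (fun k (x : ℕ) => ((x : ℝ) ^ k)⁻¹) (Icc 1 p) ks :=
  rfl

theorem zetaStarT_eq_chainSum (p : ℕ) (ks : List ℕ) :
    zetaStarT p ks = chainSum (· ≥ ·) (fun k (x : ℕ) => ((x : ℝ) ^ k)⁻¹) (Icc 1 p) ks :=
  sum_congr (filter_congr fun _ _ => antitone_iff_forall_lt) fun _ _ => rfl

theorem stmt_9_general (a b c : ℕ) (p m n : ℕ) :
    zetaStarT p (List.replicate m c ++ [b] ++ List.replicate n a) =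
      ∑ k ∈ Finset.range (m + 1), ∑ l ∈ Finset.range (n + 1),
        (-1 : ℝ) ^ (k + l) *
          zetaT p (List.replicate l a ++ [b] ++ List.replicate k c) *
          zetaStarT p (List.replicate (m - k) c) *
          zetaStarT p (List.replicate (n - l) a) := by
  simp only [zetaT_eq_chainSum, zetaStarT_eq_chainSum, List.append_assoc, List.singleton_append,
    chainSum_append_cons]
  set w : ℕ → ℕ → ℝ := fun k x => ((x : ℝ) ^ k)⁻¹
  set S := Icc 1 p
  have hc (q : ℕ) : chainSum (· ≥ ·) w {y ∈ S | y ≥ q} (List.replicate m c) =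
      ∑ k ∈ range (m + 1), (-1) ^ k * chainSum (· > ·) w {y ∈ S | q > y} (List.replicate k c) *
        chainSum (· ≥ ·) w S (List.replicate (m - k) c) := by
    rw [sum_range_chainSum_gt_mul_chainSum_ge]
    simp only [gt_iff_lt, not_lt, ge_iff_le]
  have ha (q : ℕ) : chainSum (· ≥ ·) w {y ∈ S | q ≥ y} (List.replicate n a) =
      ∑ l ∈ range (n + 1), (-1) ^ l * chainSum (· > ·) w {y ∈ S | y > q} (List.replicate l a) *
        chainSum (· ≥ ·) w S (List.replicate (n - l) a) := by
    rw [sum_range_chainSum_gt_mul_chainSum_ge]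
    simp only [gt_iff_lt, not_lt, ge_iff_le]
  simp only [hc, ha, mul_sum, sum_mul]
  rw [sum_comm_cycle]
  refine sum_congr rfl fun k _ =>
    sum_comm.trans (sum_congr rfl fun l _ => sum_congr rfl fun q _ => ?_)
  ring

theorem stmt_9 (a b c : ℕ) (ha : 0 < a) (hb : 0 < b) (hc : 0 < c) (p m n : ℕ) :
    zetaStarT p (List.replicate m c ++ [b] ++ List.replicate n a) =
      ∑ k ∈ Finset.range (m + 1), ∑ l ∈ Finset.range (n + 1),
        (-1 : ℝ) ^ (k + l) *
          zetaT p (List.replicate l a ++ [b] ++ List.replicate k c) *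
          zetaStarT p (List.replicate (m - k) c) *
          zetaStarT p (List.replicate (n - l) a) :=
  stmt_9_general a b c p m n
end

section
/- For any non-negative integers p and m, ζ*_p({2}^m,1) = Σ_{k=0}^m (-1)^k · ζ_p(1,{2}^k) · ζ*_p({2}^{m-k}). -/
open Finset Fintype

lemma Finset.sum_filter_piFinset_succ {α M : Type*} [AddCommMonoid M] {n : ℕ} (s : Finset α)
    (P : (Fin (n + 1) → α) → Prop) [DecidablePred P] (F : (Fin (n + 1) → α) → M) :
    ∑ f ∈ (piFinset fun _ => s).filter P, F f =
      ∑ a ∈ s, ∑ g ∈ (piFinset fun _ => s).filter (fun g => P (Fin.cons a g)),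
        F (Fin.cons a g) := by
  have h := filter_piFinset_eq_map_consEquiv (fun _ : Fin (n + 1) => s) (fun _ => True)
  simp only [filter_true] at h
  simp only [sum_filter, h, sum_map, sum_product]
  rfl

lemma Fin.strictAnti_cons {α : Type*} [Preorder α] {n : ℕ} {f : Fin n → α} {a : α} :
    StrictAnti (Fin.cons a f : Fin (n + 1) → α) ↔ (∀ j, f j < a) ∧ StrictAnti f :=
  Fin.strictMono_cons (α := αᵒᵈ)

lemma Fin.antitone_cons {α : Type*} [Preorder α] {n : ℕ} {f : Fin n → α} {a : α} :
    Antitone (Fin.cons a f : Fin (n + 1) → α) ↔ (∀ j, f j ≤ a) ∧ Antitone f := by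
  simp only [antitone_iff_forall_lt]
  exact Fin.liftFun_cons (α := α) (· ≥ ·)

lemma sum_filter_piFinset_Icc_cons {M : Type*} [AddCommMonoid M] {n p : ℕ}
    (P : (Fin (n + 1) → ℕ) → Prop) [DecidablePred P] (Q : (Fin n → ℕ) → Prop) [DecidablePred Q]
    (b : ℕ → ℕ) (hb : ∀ a ≤ p, b a ≤ p)
    (hP : ∀ a, 1 ≤ a → ∀ g, P (Fin.cons a g) ↔ (∀ j, g j ≤ b a) ∧ Q g)
    (F : (Fin (n + 1) → ℕ) → M) :
    ∑ f ∈ (piFinset fun _ => Icc 1 p).filter P, F f =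
      ∑ a ∈ Icc 1 p, ∑ g ∈ (piFinset fun _ => Icc 1 (b a)).filter Q, F (Fin.cons a g) := by
  rw [sum_filter_piFinset_succ]
  refine sum_congr rfl fun a ha => sum_congr ?_ fun _ _ => rfl
  ext g
  have := hb a (mem_Icc.1 ha).2
  simp only [mem_filter, mem_piFinset, mem_Icc, hP a (mem_Icc.1 ha).1]
  exact ⟨fun ⟨h, hg, hQ⟩ => ⟨fun j => ⟨(h j).1, hg j⟩, hQ⟩,
    fun ⟨h, hQ⟩ => ⟨fun j => ⟨(h j).1, (h j).2.trans this⟩, fun j => (h j).2, hQ⟩⟩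

lemma prod_cons_pow_inv (a k : ℕ) (ks : List ℕ) (g : Fin ks.length → ℕ) :
    ∏ i, (((Fin.cons a g : Fin (k :: ks).length → ℕ) i : ℝ) ^ (k :: ks).get i)⁻¹ =
      ((a : ℝ) ^ k)⁻¹ * ∏ i, ((g i : ℝ) ^ ks.get i)⁻¹ := by
  rw [Fin.prod_univ_succ]
  rfl

theorem zetaT_cons (p k : ℕ) (ks : List ℕ) :
    zetaT p (k :: ks) = ∑ a ∈ Icc 1 p, ((a : ℝ) ^ k)⁻¹ * zetaT (a - 1) ks := by
  refine (sum_filter_piFinset_Icc_cons (n := ks.length) (fun f => ∀ i j, i < j → f j < f i)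
    (fun g => ∀ i j, i < j → g j < g i) (· - 1) (fun a h => by omega) (fun a ha g => ?_) _).trans
    (sum_congr rfl fun a _ => ?_)
  · refine Fin.strictAnti_cons.trans (and_congr_left' (forall_congr' fun j => ?_))
    omega
  · rw [zetaT, mul_sum]
    exact sum_congr rfl fun g _ => prod_cons_pow_inv a k ks g

theorem zetaStarT_cons (p k : ℕ) (ks : List ℕ) :
    zetaStarT p (k :: ks) = ∑ a ∈ Icc 1 p, ((a : ℝ) ^ k)⁻¹ * zetaStarT a ks := by
  refine (sum_filter_piFinset_Icc_cons (n := ks.length) (fun f => ∀ i j, i ≤ j → f j ≤ f i)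
    (fun g => ∀ i j, i ≤ j → g j ≤ g i) id (fun a h => h) (fun a _ g => Fin.antitone_cons) _).trans
    (sum_congr rfl fun a _ => ?_)
  rw [zetaStarT, mul_sum]
  exact sum_congr rfl fun g _ => prod_cons_pow_inv a k ks g

theorem zetaT_nil (p : ℕ) : zetaT p [] = 1 := by simp [zetaT]

theorem zetaStarT_nil (p : ℕ) : zetaStarT p [] = 1 := by simp [zetaStarT]

theorem zetaT_zero_cons (k : ℕ) (ks : List ℕ) : zetaT 0 (k :: ks) = 0 := by simp [zetaT_cons]

theorem zetaStarT_zero_cons (k : ℕ) (ks : List ℕ) : zetaStarT 0 (k :: ks) = 0 := by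
  simp [zetaStarT_cons]

theorem zetaT_succ_cons (p k : ℕ) (ks : List ℕ) :
    zetaT (p + 1) (k :: ks) = zetaT p (k :: ks) + ((p + 1 : ℝ) ^ k)⁻¹ * zetaT p ks := by
  rw [zetaT_cons, zetaT_cons, sum_Icc_succ_top (by omega)]
  simp

theorem zetaStarT_succ_cons (p k : ℕ) (ks : List ℕ) :
    zetaStarT (p + 1) (k :: ks) =
      zetaStarT p (k :: ks) + ((p + 1 : ℝ) ^ k)⁻¹ * zetaStarT (p + 1) ks := by
  rw [zetaStarT_cons, zetaStarT_cons, sum_Icc_succ_top (by omega)]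
  simp

open PowerSeries List

noncomputable def zetaStarTwoSeries (p : ℕ) : ℝ⟦X⟧ :=
  mk fun m => zetaStarT p (replicate m 2)

noncomputable def zetaTwoAltSeries (p : ℕ) : ℝ⟦X⟧ :=
  mk fun k => (-1) ^ k * zetaT p (replicate k 2)

noncomputable def zetaStarTwoOneSeries (p : ℕ) : ℝ⟦X⟧ :=
  mk fun m => zetaStarT p (replicate m 2 ++ [1])

noncomputable def zetaOneTwoAltSeries (p : ℕ) : ℝ⟦X⟧ :=
  mk fun k => (-1) ^ k * zetaT p (1 :: replicate k 2)

theorem zetaStarTwoSeries_zero : zetaStarTwoSeries 0 = 1 := by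
  ext (_ | m) <;> simp [zetaStarTwoSeries, coeff_one, zetaStarT_nil, replicate_succ,
    zetaStarT_zero_cons]

theorem zetaTwoAltSeries_zero : zetaTwoAltSeries 0 = 1 := by
  ext (_ | m) <;> simp [zetaTwoAltSeries, coeff_one, zetaT_nil, replicate_succ, zetaT_zero_cons]

theorem zetaOneTwoAltSeries_zero : zetaOneTwoAltSeries 0 = 0 := by
  ext m; simp [zetaOneTwoAltSeries, zetaT_zero_cons]

theorem zetaStarTwoOneSeries_zero : zetaStarTwoOneSeries 0 = 0 := by
  ext (_ | m) <;> simp [zetaStarTwoOneSeries, replicate_succ, zetaStarT_zero_cons]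

theorem one_sub_mul_zetaStarTwoSeries_succ (p : ℕ) :
    (1 - C ((p + 1 : ℝ) ^ 2)⁻¹ * X) * zetaStarTwoSeries (p + 1) = zetaStarTwoSeries p := by
  suffices h : zetaStarTwoSeries (p + 1) =
      zetaStarTwoSeries p + C ((p + 1 : ℝ) ^ 2)⁻¹ * X * zetaStarTwoSeries (p + 1) by
    linear_combination h
  ext (_ | m)
  · simp [zetaStarTwoSeries, zetaStarT_nil]
  · simp [zetaStarTwoSeries, replicate_succ, zetaStarT_succ_cons, mul_assoc]

theorem zetaTwoAltSeries_succ (p : ℕ) :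
    zetaTwoAltSeries (p + 1) = (1 - C ((p + 1 : ℝ) ^ 2)⁻¹ * X) * zetaTwoAltSeries p := by
  ext (_ | m)
  · simp [zetaTwoAltSeries, zetaT_nil]
  · simp only [zetaTwoAltSeries, coeff_mk, replicate_succ, zetaT_succ_cons, sub_mul, one_mul,
      map_sub, mul_assoc, coeff_C_mul, coeff_succ_X_mul]
    ring

theorem zetaTwoAltSeries_mul_zetaStarTwoSeries (p : ℕ) :
    zetaTwoAltSeries p * zetaStarTwoSeries p = 1 := by
  induction p with
  | zero => rw [zetaTwoAltSeries_zero, zetaStarTwoSeries_zero, one_mul]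
  | succ p ih =>
    rw [zetaTwoAltSeries_succ, mul_comm (1 - _), mul_assoc, one_sub_mul_zetaStarTwoSeries_succ, ih]

theorem one_sub_mul_zetaStarTwoOneSeries_succ (p : ℕ) :
    (1 - C ((p + 1 : ℝ) ^ 2)⁻¹ * X) * zetaStarTwoOneSeries (p + 1) =
      zetaStarTwoOneSeries p + C (p + 1 : ℝ)⁻¹ := by
  suffices h : zetaStarTwoOneSeries (p + 1) = zetaStarTwoOneSeries p + C (p + 1 : ℝ)⁻¹ +
      C ((p + 1 : ℝ) ^ 2)⁻¹ * X * zetaStarTwoOneSeries (p + 1) by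
    linear_combination h
  ext (_ | m)
  · simp [zetaStarTwoOneSeries, zetaStarT_succ_cons, zetaStarT_nil]
  · simp [zetaStarTwoOneSeries, replicate_succ, zetaStarT_succ_cons, mul_assoc]

theorem zetaOneTwoAltSeries_succ (p : ℕ) :
    zetaOneTwoAltSeries (p + 1) = zetaOneTwoAltSeries p + C (p + 1 : ℝ)⁻¹ * zetaTwoAltSeries p := by
  ext k
  simp only [zetaOneTwoAltSeries, zetaTwoAltSeries, zetaT_succ_cons, pow_one, coeff_mk, map_add,
    coeff_C_mul]
  ring

theorem zetaStarTwoOneSeries_eq_mul (p : ℕ) :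
    zetaStarTwoOneSeries p = zetaOneTwoAltSeries p * zetaStarTwoSeries p := by
  induction p with
  | zero => rw [zetaStarTwoOneSeries_zero, zetaOneTwoAltSeries_zero, zero_mul]
  | succ p ih =>
    have hu : (1 - C ((p + 1 : ℝ) ^ 2)⁻¹ * X) ≠ 0 := fun h => by
      simpa using congrArg constantCoeff h
    refine mul_left_cancel₀ hu ?_
    rw [one_sub_mul_zetaStarTwoOneSeries_succ, mul_left_comm,
      one_sub_mul_zetaStarTwoSeries_succ, zetaOneTwoAltSeries_succ, ih, add_mul, mul_assoc,
      zetaTwoAltSeries_mul_zetaStarTwoSeries, mul_one]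

theorem stmt_10 (p m : ℕ) :
    zetaStarT p (List.replicate m 2 ++ [1]) =
      ∑ k ∈ Finset.range (m + 1),
        (-1 : ℝ) ^ k * zetaT p (1 :: List.replicate k 2) *
          zetaStarT p (List.replicate (m - k) 2) := by
  have h := congrArg (coeff m) (zetaStarTwoOneSeries_eq_mul p)
  rw [coeff_mul, Finset.Nat.sum_antidiagonal_eq_sum_range_succ
    fun i j => coeff i (zetaOneTwoAltSeries p) * coeff j (zetaStarTwoSeries p)] at h
  simpa only [zetaStarTwoOneSeries, zetaOneTwoAltSeries, zetaStarTwoSeries, coeff_mk] using h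
end

section
/- For every integer m ≥ 1, ζ*({2}^m,1) = 2·ζ(2m+1). -/
/-!
Truncating `ζ*({2}^m, 1)` to entries at most `N` gives exactly `∑_{k ≤ N} w(N, k) / k^(2m+1)`
with `w(N, k) = 2 C(2N, N-k) / C(2N, N)`. For `m = 0` this is the identity
`H_N = ∑_{k ≤ N} w(N, k) / k`; each further leading `2` is absorbed by the telescoping sum
`∑_{c ≤ N} w(c, k) / c² = w(N, k) / k²`. Since `0 ≤ w(N, k) ≤ 2` and `w(N, k) → 2` as
`N → ∞`, dominated convergence gives the limit `2 ζ(2m+1)`.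
-/

open scoped BigOperators

/-- Multiple zeta-star value: sum over weakly decreasing tuples of positive integers. -/
noncomputable def zetaStar (ks : List ℕ) : ℝ :=
  ∑' f : {f : Fin ks.length → ℕ // (∀ i, 1 ≤ f i) ∧ ∀ i j, i ≤ j → f j ≤ f i},
    ∏ i, ((f.1 i : ℝ) ^ ks.get i)⁻¹
noncomputable def rzeta (k : ℕ) : ℝ := ∑' n : ℕ+, ((n : ℝ) ^ k)⁻¹

open Finset Filter Topology

theorem Nat.cast_descFactorial_succ {R : Type*} [Ring R] (n k : ℕ) :
    (n.descFactorial (k + 1) : R) = (n - k) * n.descFactorial k := by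
  rcases le_or_gt k n with h | h
  · rw [Nat.descFactorial_succ, Nat.cast_mul, Nat.cast_sub h]
  · rw [Nat.descFactorial_eq_zero_iff_lt.2 h, Nat.descFactorial_eq_zero_iff_lt.2 (by omega)]
    simp

theorem Nat.cast_succ_descFactorial {R : Type*} [Ring R] (n k : ℕ) :
    ((n : R) + 1 - k) * (n + 1).descFactorial k = (n + 1) * n.descFactorial k := by
  rcases le_or_gt k (n + 1) with h | h
  · have := congrArg (Nat.cast (R := R)) (Nat.succ_descFactorial n k)
    push_cast [h] at this
    exact this
  · rw [Nat.descFactorial_eq_zero_iff_lt.2 h, Nat.descFactorial_eq_zero_iff_lt.2 (by omega)]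
    simp

theorem Fin.antitone_cons_iff {α : Type*} [Preorder α] {n : ℕ} {a : α} {f : Fin n → α} :
    Antitone (Fin.cons a f : Fin (n + 1) → α) ↔ (∀ i, f i ≤ a) ∧ Antitone f := by
  refine ⟨fun h => ⟨fun i => by simpa using h (Fin.zero_le i.succ),
    fun i j hij => by simpa using h (Fin.succ_le_succ_iff.2 hij)⟩, ?_⟩
  rintro ⟨hle, hf⟩ i j hij
  cases i using Fin.cases with
  | zero => cases j using Fin.cases <;> simp [hle]
  | succ i =>
    cases j using Fin.cases with
    | zero => exact absurd hij (by simp)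
    | succ j => simpa using hf (Fin.succ_le_succ_iff.1 hij)

theorem hasSum_of_tendsto_sum_of_nonneg {ι : Type*} {f : ι → ℝ} (hf : 0 ≤ f)
    {s : ℕ → Finset ι} (hs : Monotone s) (hcover : ∀ i, ∃ N, i ∈ s N) {L : ℝ}
    (hL : Tendsto (fun N => ∑ i ∈ s N, f i) atTop (𝓝 L)) : HasSum f L := by
  have hst := tendsto_atTop_finset_of_monotone hs hcover
  have hmono : Monotone fun N => ∑ i ∈ s N, f i := fun _ _ h =>
    sum_le_sum_of_subset_of_nonneg (hs h) fun i _ _ => hf i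
  have hsum : Summable f := summable_of_sum_le hf fun u => by
    obtain ⟨N, hN⟩ := (tendsto_atTop.1 hst u).exists
    exact (sum_le_sum_of_subset_of_nonneg hN fun i _ _ => hf i).trans (hmono.ge_of_tendsto hL N)
  rw [← tendsto_nhds_unique (hsum.hasSum.comp hst) hL]
  exact hsum.hasSum

namespace ZetaStar

/-- `weight N k = 2 * C(2N, N - k) / C(2N, N)`, written so that it vanishes for `k > N`. -/
noncomputable def weight (N k : ℕ) : ℝ :=
  2 * N.descFactorial k / (N + k).descFactorial k

theorem weight_zero_right (N : ℕ) : weight N 0 = 2 := by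
  simp [weight]

theorem weight_of_lt {N k : ℕ} (h : N < k) : weight N k = 0 := by
  simp [weight, Nat.descFactorial_eq_zero_iff_lt.2 h]

theorem weight_nonneg (N k : ℕ) : 0 ≤ weight N k := by
  unfold weight; positivity

theorem descFactorial_add_pos (N k : ℕ) : (0 : ℝ) < (N + k).descFactorial k := by
  exact_mod_cast Nat.descFactorial_pos.2 (by omega)

theorem weight_succ_right (N k : ℕ) :
    ((N : ℝ) + k + 1) * weight N (k + 1) = (N - k) * weight N k := by
  have h := descFactorial_add_pos N k
  have hs : ((N + (k + 1)).descFactorial (k + 1) : ℝ) =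
      (N + k + 1) * (N + k).descFactorial k := by
    rw [show N + (k + 1) = N + k + 1 by omega, Nat.succ_descFactorial_succ]; push_cast; ring
  simp only [weight, hs, Nat.cast_descFactorial_succ]
  field_simp

theorem weight_succ_left (N k : ℕ) :
    ((N : ℝ) + 1) ^ 2 * (weight (N + 1) k - weight N k) = k ^ 2 * weight (N + 1) k := by
  have h₁ := Nat.cast_succ_descFactorial (R := ℝ) N k
  have h₂ := Nat.cast_succ_descFactorial (R := ℝ) (N + k) k
  have hp := descFactorial_add_pos N k
  have hp' := descFactorial_add_pos (N + 1) k
  rw [show N + k + 1 = N + 1 + k by omega] at h₂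
  push_cast at h₂
  simp only [weight]
  field_simp
  linear_combination ((N : ℝ) + 1 + k) * ((N + k).descFactorial k : ℝ) * h₁
    - ((N : ℝ) + 1) * (N.descFactorial k : ℝ) * h₂

theorem sum_mul_weight (N : ℕ) : ∑ k ∈ Icc 1 N, (k : ℝ) * weight N k = N := by
  set ψ : ℕ → ℝ := fun k => (N + k) * weight N k
  have step (k : ℕ) : 2 * ((k : ℝ) * weight N k) = ψ k - ψ (k + 1) := by
    have := weight_succ_right N k
    simp only [ψ]; push_cast; linarith
  have hsum := sum_range_sub' ψ (N + 1)
  rw [← sum_congr rfl fun k _ => step k, ← mul_sum, sum_range_eq_add_Ico _ (by omega),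
    Ico_add_one_right_eq_Icc] at hsum
  simp only [ψ, weight_zero_right, weight_of_lt (Nat.lt_succ_self N)] at hsum
  push_cast at hsum
  linarith

theorem sum_weight_div (N : ℕ) :
    ∑ k ∈ Icc 1 N, weight N k / k = ∑ k ∈ Icc 1 N, (k : ℝ)⁻¹ := by
  induction N with
  | zero => simp
  | succ N ih =>
    have split : ∀ k ∈ Icc 1 (N + 1),
        weight (N + 1) k / k = weight N k / k + k * weight (N + 1) k / (N + 1 : ℕ) ^ 2 := by
      intro k hk
      have hk0 : (k : ℝ) ≠ 0 := Nat.cast_ne_zero.2 (by simp at hk; omega)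
      have := weight_succ_left N k
      push_cast
      field_simp
      linear_combination this
    rw [sum_congr rfl split, sum_add_distrib, ← sum_div, sum_mul_weight,
      sum_Icc_succ_top (by omega), weight_of_lt (Nat.lt_succ_self N), ih,
      sum_Icc_succ_top (by omega)]
    have : ((N + 1 : ℕ) : ℝ) ≠ 0 := by positivity
    field_simp
    ring

theorem sum_weight_div_sq {k : ℕ} (hk : k ≠ 0) (N : ℕ) :
    ∑ c ∈ Icc 1 N, weight c k / c ^ 2 = weight N k / k ^ 2 := by
  induction N with
  | zero => simp [weight_of_lt (Nat.pos_of_ne_zero hk)]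
  | succ N ih =>
    have := weight_succ_left N k
    rw [sum_Icc_succ_top (by omega), ih]
    have hk0 : (k : ℝ) ≠ 0 := by positivity
    push_cast
    field_simp
    linear_combination -this

theorem weight_le_two (N k : ℕ) : weight N k ≤ 2 := by
  have h : N.descFactorial k ≤ (N + k).descFactorial k :=
    calc N.descFactorial k ≤ N ^ k := Nat.descFactorial_le_pow N k
      _ ≤ (N + k + 1 - k) ^ k := Nat.pow_le_pow_left (by omega) k
      _ ≤ (N + k).descFactorial k := Nat.pow_sub_le_descFactorial _ k
  have h' : (N.descFactorial k : ℝ) ≤ (N + k).descFactorial k := by exact_mod_cast h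
  rw [weight, div_le_iff₀ (descFactorial_add_pos N k)]
  linarith

theorem two_mul_pow_le_weight {N k : ℕ} (hk : k ≤ N) :
    2 * (((N : ℝ) + (1 - k)) / (N + k)) ^ k ≤ weight N k := by
  have hnum : ((N : ℝ) + (1 - k)) ^ k ≤ N.descFactorial k := by
    have := Nat.pow_sub_le_descFactorial N k
    rw [← Nat.cast_le (α := ℝ)] at this
    push_cast [Nat.cast_sub (show k ≤ N + 1 by omega)] at this
    rwa [add_sub_assoc] at this
  have hden : ((N + k).descFactorial k : ℝ) ≤ ((N : ℝ) + k) ^ k := by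
    exact_mod_cast Nat.descFactorial_le_pow (N + k) k
  rw [div_pow, weight, mul_div_assoc]
  gcongr
  exact descFactorial_add_pos N k

theorem tendsto_weight (k : ℕ) : Tendsto (fun N => weight N k) atTop (𝓝 2) := by
  have hratio : Tendsto (fun N : ℕ => ((N : ℝ) + (1 - k)) / (N + k)) atTop (𝓝 1) := by
    simpa [add_div] using (tendsto_natCast_div_add_atTop (k : ℝ)).add
      (tendsto_const_nhds.div_atTop
        (tendsto_atTop_add_const_right _ (k : ℝ) tendsto_natCast_atTop_atTop))
  have hlower := (hratio.pow k).const_mul 2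
  rw [one_pow, mul_one] at hlower
  refine tendsto_of_tendsto_of_tendsto_of_le_of_le' hlower tendsto_const_nhds ?_ ?_
  · filter_upwards [eventually_ge_atTop k] with N hN using two_mul_pow_le_weight hN
  · exact Eventually.of_forall fun N => weight_le_two N k

theorem sum_Icc_weight_div_of_le {c N : ℕ} (h : c ≤ N) (f : ℕ → ℝ) :
    ∑ k ∈ Icc 1 N, weight c k / f k = ∑ k ∈ Icc 1 c, weight c k / f k := by
  refine (sum_subset (Icc_subset_Icc_right h) fun k hk hkc => ?_).symm
  simp only [mem_Icc, not_and, not_le] at hk hkc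
  rw [weight_of_lt (hkc hk.1), zero_div]


def descTuples (n N : ℕ) : Finset (Fin n → ℕ) :=
  {f ∈ Fintype.piFinset fun _ => Icc 1 N | ∀ i j, i ≤ j → f j ≤ f i}

variable {n N : ℕ}

theorem mem_descTuples {f : Fin n → ℕ} :
    f ∈ descTuples n N ↔ (∀ i, f i ∈ Icc 1 N) ∧ Antitone f := by
  simp only [descTuples, mem_filter, Fintype.mem_piFinset, Antitone]

theorem cons_mem_descTuples {c : ℕ} {g : Fin n → ℕ} :
    (Fin.cons c g : Fin (n + 1) → ℕ) ∈ descTuples (n + 1) N ↔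
      c ∈ Icc 1 N ∧ g ∈ descTuples n c := by
  simp only [mem_descTuples, Fin.forall_fin_succ, Fin.cons_zero, Fin.cons_succ,
    Fin.antitone_cons_iff, mem_Icc]
  constructor
  · rintro ⟨⟨hc, hg⟩, hle, hanti⟩
    exact ⟨hc, fun i => ⟨(hg i).1, hle i⟩, hanti⟩
  · rintro ⟨hc, hg, hanti⟩
    exact ⟨⟨hc, fun i => ⟨(hg i).1, (hg i).2.trans hc.2⟩⟩, fun i => (hg i).2, hanti⟩

theorem descTuples_mono (n : ℕ) : Monotone (descTuples n) := fun _ _ h f hf => by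
  rw [mem_descTuples] at hf ⊢
  exact ⟨fun i => Icc_subset_Icc_right h (hf.1 i), hf.2⟩

theorem sum_descTuples_succ {M : Type*} [AddCommMonoid M] (F : (Fin (n + 1) → ℕ) → M) :
    ∑ f ∈ descTuples (n + 1) N, F f =
      ∑ c ∈ Icc 1 N, ∑ g ∈ descTuples n c, F (Fin.cons c g) := by
  rw [sum_sigma']
  refine sum_bij' (fun f _ => ⟨f 0, Fin.tail f⟩) (fun p _ => Fin.cons p.1 p.2) ?_ ?_ ?_ ?_ ?_
  · intro f hf
    rw [← Fin.cons_self_tail f, cons_mem_descTuples] at hf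
    exact mem_sigma.2 hf
  · rintro ⟨c, g⟩ h
    exact cons_mem_descTuples.2 (mem_sigma.1 h)
  · intro f _
    exact Fin.cons_self_tail f
  · rintro ⟨c, g⟩ _
    simp
  · intro f _
    simp

noncomputable def trunc (ks : List ℕ) (N : ℕ) : ℝ :=
  ∑ f ∈ descTuples ks.length N, ∏ i, ((f i : ℝ) ^ ks.get i)⁻¹

theorem trunc_nil (N : ℕ) : trunc [] N = 1 := by
  simp [trunc, descTuples]

theorem trunc_cons (s : ℕ) (ks : List ℕ) (N : ℕ) :
    trunc (s :: ks) N = ∑ c ∈ Icc 1 N, ((c : ℝ) ^ s)⁻¹ * trunc ks c := by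
  refine (sum_descTuples_succ _).trans (sum_congr rfl fun c _ => ?_)
  rw [trunc, mul_sum]
  refine sum_congr rfl fun g _ => ?_
  exact (Fin.prod_univ_succ (n := ks.length) _).trans (by simp)

theorem trunc_replicate_two_append_one (m N : ℕ) :
    trunc (List.replicate m 2 ++ [1]) N = ∑ k ∈ Icc 1 N, weight N k / k ^ (2 * m + 1) := by
  induction m generalizing N with
  | zero => simp [trunc_cons, trunc_nil, sum_weight_div]
  | succ m ih =>
    rw [List.replicate_succ, List.cons_append, trunc_cons]
    calc ∑ c ∈ Icc 1 N, ((c : ℝ) ^ 2)⁻¹ * trunc (List.replicate m 2 ++ [1]) c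
        = ∑ c ∈ Icc 1 N, ∑ k ∈ Icc 1 N, weight c k / c ^ 2 / k ^ (2 * m + 1) := by
          refine sum_congr rfl fun c hc => ?_
          rw [ih, ← sum_Icc_weight_div_of_le (mem_Icc.1 hc).2, mul_sum]
          exact sum_congr rfl fun k _ => by ring
      _ = ∑ k ∈ Icc 1 N, weight N k / k ^ (2 * (m + 1) + 1) := by
          rw [sum_comm]
          refine sum_congr rfl fun k hk => ?_
          rw [← sum_div, sum_weight_div_sq (by simp at hk; omega), div_div, ← pow_add]
          ring_nf

theorem trunc_replicate_two_append_one_eq_tsum (m N : ℕ) :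
    trunc (List.replicate m 2 ++ [1]) N = ∑' k : ℕ+, weight N k / (k : ℝ) ^ (2 * m + 1) := by
  rw [trunc_replicate_two_append_one,
    tsum_pnat_eq_tsum_succ (f := fun k => weight N k / (k : ℝ) ^ (2 * m + 1)),
    tsum_eq_sum (s := range N)]
  · rw [range_eq_Ico, sum_Ico_add' (fun k => weight N k / (k : ℝ) ^ (2 * m + 1)), zero_add,
      Ico_add_one_right_eq_Icc]
  · intro k hk
    rw [weight_of_lt (by simpa using hk), zero_div]

theorem tendsto_trunc_replicate_two_append_one {m : ℕ} (hm : 1 ≤ m) :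
    Tendsto (trunc (List.replicate m 2 ++ [1])) atTop (𝓝 (2 * rzeta (2 * m + 1))) := by
  have hbound : Summable fun k : ℕ+ => 2 * ((k : ℝ) ^ (2 * m + 1))⁻¹ :=
    summable_pnat_iff_summable_nat.2 ((Real.summable_nat_pow_inv.2 (by omega)).mul_left 2)
  rw [funext (trunc_replicate_two_append_one_eq_tsum m), rzeta, ← tsum_mul_left]
  refine tendsto_tsum_of_dominated_convergence hbound
    (fun k => by
      simpa [div_eq_mul_inv] using (tendsto_weight k).div_const ((k : ℝ) ^ (2 * m + 1)))
    (Eventually.of_forall fun N k => ?_)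
  rw [Real.norm_of_nonneg (by have := weight_nonneg N k; positivity), div_eq_mul_inv]
  gcongr
  exact weight_le_two N k

theorem zetaStar_eq_of_tendsto_trunc {ks : List ℕ} {L : ℝ}
    (h : Tendsto (trunc ks) atTop (𝓝 L)) : zetaStar ks = L := by
  refine (hasSum_of_tendsto_sum_of_nonneg
    (s := fun N => (descTuples ks.length N).subtype _) (fun f => ?_) (fun _ _ hMN =>
      subtype_mono (descTuples_mono _ hMN)) (fun f => ⟨univ.sup f.1, ?_⟩) ?_).tsum_eq
  · exact prod_nonneg fun i _ => by positivity
  · rw [mem_subtype, mem_descTuples]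
    exact ⟨fun i => mem_Icc.2 ⟨f.2.1 i, le_sup (mem_univ i)⟩, f.2.2⟩
  · refine h.congr fun N => (sum_subtype_of_mem _ fun f hf => ?_).symm
    rw [mem_descTuples] at hf
    exact ⟨fun i => (mem_Icc.1 (hf.1 i)).1, hf.2⟩

end ZetaStar

theorem stmt_18 (m : ℕ) (hm : 1 ≤ m) :
    zetaStar (List.replicate m 2 ++ [1]) = 2 * rzeta (2 * m + 1) :=
  ZetaStar.zetaStar_eq_of_tendsto_trunc (ZetaStar.tendsto_trunc_replicate_two_append_one hm)
end
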